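/- Let m ≥ 2 and let τ ∈ S_m be cluster-free. For all n ≥ 3, all l with 2 ≤ l ≤ n-1, and all k with 1 ≤ k ≤ n-l+1, one has |A^{(n)}_{l;k} ∩ S_n(τ)| = |S_{n-l+1}(τ)| · |S_l(τ)|; equivalently, under the uniform probability measure P_n^{av(τ)} on S_n(τ), P_n^{av(τ)}(A^{(n)}_{l;k}) = |S_{n-l+1}(τ)|·|S_l(τ)| / |S_n(τ)|. -/

import Mathlib

open Filter

def Contains {n m : ℕ} (σ : Fin n → Fin n) (τ : Fin m → Fin m) : Prop :=
  ∃ f : Fin m → Fin n, StrictMono f ∧ ∀ j k : Fin m, σ (f j) < σ (f k) ↔ τ j < τ k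

def Avoids {n m : ℕ} (σ : Fin n → Fin n) (τ : Fin m → Fin m) : Prop :=
  ¬ Contains σ τ

def AvoidSet (n : ℕ) {m : ℕ} (τ : Equiv.Perm (Fin m)) : Set (Equiv.Perm (Fin n)) :=
  {σ : Equiv.Perm (Fin n) | Avoids ⇑σ ⇑τ}

def ClusterAt {n : ℕ} (l k a : ℕ) (σ : Equiv.Perm (Fin n)) : Prop :=
  (Finset.univ.filter fun i : Fin n => a ≤ (i : ℕ) + 1 ∧ (i : ℕ) + 1 < a + l).image
      (fun i => (σ i : ℕ) + 1) = Finset.Ico k (k + l)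

def ClusterEvent (n l k : ℕ) : Set (Equiv.Perm (Fin n)) :=
  {σ : Equiv.Perm (Fin n) | ∃ a : ℕ, 1 ≤ a ∧ a ≤ n - l + 1 ∧ ClusterAt l k a σ}

def ClusterFree {m : ℕ} (τ : Equiv.Perm (Fin m)) : Prop :=
  ∀ l a k : ℕ, 2 ≤ l → l ≤ m - 1 → 1 ≤ a → a + l ≤ m + 1 → ¬ ClusterAt l k a τ

def ContainsTightly12 {m : ℕ} (τ : Equiv.Perm (Fin m)) : Prop :=
  ∃ i j : Fin m, (j : ℕ) = (i : ℕ) + 1 ∧ (τ j : ℕ) = (τ i : ℕ) + 1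

def ContainsTightly21 {m : ℕ} (τ : Equiv.Perm (Fin m)) : Prop :=
  ∃ i j : Fin m, (j : ℕ) = (i : ℕ) + 1 ∧ (τ i : ℕ) = (τ j : ℕ) + 1

def perm123 : Equiv.Perm (Fin 3) := Equiv.refl (Fin 3)

def perm321 : Equiv.Perm (Fin 3) :=
  ⟨![2, 1, 0], ![2, 1, 0], by intro x; fin_cases x <;> rfl, by intro x; fin_cases x <;> rfl⟩

def p2413 : Equiv.Perm (Fin 4) :=
  ⟨![1, 3, 0, 2], ![2, 0, 3, 1], by intro x; fin_cases x <;> rfl, by intro x; fin_cases x <;> rfl⟩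

def p3142 : Equiv.Perm (Fin 4) :=
  ⟨![2, 0, 3, 1], ![1, 3, 0, 2], by intro x; fin_cases x <;> rfl, by intro x; fin_cases x <;> rfl⟩

def SepSet (n : ℕ) : Set (Equiv.Perm (Fin n)) :=
  {σ : Equiv.Perm (Fin n) | Avoids ⇑σ ⇑p2413 ∧ Avoids ⇑σ ⇑p3142}

/-!
If `σ ∈ S_n` carries the positions `b, …, b + l - 1` onto the values `c, …, c + l - 1`, then
collapsing this block to a single entry gives `π ∈ S_{n-l+1}` with `π b = c`, and the block itself
has a pattern `ρ ∈ S_l`; conversely `σ` is recovered by inflating the entry `b` of `π` by `ρ`.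
For fixed `c` the block position of `σ` is unique, and `b = π⁻¹ c`, so `(π, ρ) ↦ σ` is a bijection
`S_{n-l+1} × S_l → A^{(n)}_{l;c+1}`. It respects avoidance of a cluster-free `τ`: both `π` and `ρ`
are patterns of `σ`, and an occurrence of `τ` in `σ` either meets the block at most once (and
collapses to an occurrence in `π`), lies inside it (an occurrence in `ρ`), or meets it in a set
of entries that is an interval of positions with an interval of values, i.e. a cluster of `τ`.
-/

theorem Finset.exists_mem_iff_of_ordConnected {m : ℕ} {T : Finset (Fin m)} (hne : T.Nonempty)
    (hT : (T : Set (Fin m)).OrdConnected) :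
    ∃ p : ℕ, p + T.card ≤ m ∧ ∀ j : Fin m, j ∈ T ↔ p ≤ j ∧ (j : ℕ) < p + T.card := by
  have hmem : ∀ j, j ∈ T ↔ T.min' hne ≤ j ∧ j ≤ T.max' hne := fun j =>
    ⟨fun hj => ⟨T.min'_le j hj, T.le_max' j hj⟩,
      fun hj => hT.out (T.min'_mem hne) (T.max'_mem hne) hj⟩
  have hcard : T.card = T.max' hne + 1 - T.min' hne := by
    rw [← Fin.card_Icc]
    congr 1
    ext j
    rw [hmem, Finset.mem_Icc]
  have hle : (T.min' hne : ℕ) ≤ T.max' hne := T.min'_le _ (T.max'_mem hne)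
  refine ⟨T.min' hne, by omega, fun j => ?_⟩
  rw [hmem, Fin.le_def, Fin.le_def]
  omega

theorem Contains.trans {a b c : ℕ} {σ : Fin a → Fin a} {ρ : Fin b → Fin b} {τ : Fin c → Fin c}
    (hσρ : Contains σ ρ) (hρτ : Contains ρ τ) : Contains σ τ := by
  obtain ⟨f, hf, hfρ⟩ := hσρ
  obtain ⟨g, hg, hgτ⟩ := hρτ
  exact ⟨f ∘ g, hf.comp hg, fun j k => (hfρ (g j) (g k)).trans (hgτ j k)⟩

theorem Avoids.of_contains {a b c : ℕ} {σ : Fin a → Fin a} {ρ : Fin b → Fin b}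
    {τ : Fin c → Fin c} (hσ : Avoids σ τ) (hσρ : Contains σ ρ) : Avoids ρ τ :=
  fun hρ => hσ (hσρ.trans hρ)

namespace Inflation

open Equiv Finset

/- A block of length `d + 1` in a permutation of `Fin (N + d)` collapses to one entry of
`Fin N`; indexing by `N` and `d` avoids the truncated `n - l + 1`. Positions and values are
0-based, while `ClusterAt` is 1-based (see `clusterAt_iff_isBlock`). -/

def collapse (b d x : ℕ) : ℕ := if x ≤ b then x else if x ≤ b + d then b else x - d

def expand (b d y : ℕ) : ℕ := if y ≤ b then y else y + d

section Arithmetic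

variable {b d x y N : ℕ}

theorem collapse_expand : collapse b d (expand b d y) = y := by
  unfold collapse expand; split_ifs <;> omega

theorem expand_collapse (hx : ¬(b ≤ x ∧ x ≤ b + d)) : expand b d (collapse b d x) = x := by
  unfold collapse expand; split_ifs <;> omega

theorem collapse_eq_iff : collapse b d x = b ↔ b ≤ x ∧ x ≤ b + d := by
  unfold collapse; split_ifs <;> omega

theorem expand_mem_iff : b ≤ expand b d y ∧ expand b d y ≤ b + d ↔ y = b := by
  unfold expand; split_ifs <;> omega

theorem collapse_eq_collapse_iff :
    collapse b d x = collapse b d y ↔ x = y ∨ (b ≤ x ∧ x ≤ b + d) ∧ (b ≤ y ∧ y ≤ b + d) := by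
  unfold collapse; split_ifs <;> omega

theorem collapse_lt_collapse_iff (h : ¬((b ≤ x ∧ x ≤ b + d) ∧ (b ≤ y ∧ y ≤ b + d))) :
    collapse b d x < collapse b d y ↔ x < y := by
  unfold collapse; split_ifs <;> omega

theorem expand_strictMono : StrictMono (expand b d) := by
  intro y y' h; unfold expand; split_ifs <;> omega

theorem collapse_lt (hb : b < N) (hx : x < N + d) : collapse b d x < N := by
  unfold collapse; split_ifs <;> omega

theorem expand_lt (hy : y < N) : expand b d y < N + d := by
  unfold expand; split_ifs <;> omega

end Arithmetic

def IsBlock {n : ℕ} (σ : Perm (Fin n)) (d b c : ℕ) : Prop :=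
  ∀ i : Fin n, b ≤ i ∧ (i : ℕ) ≤ b + d ↔ c ≤ σ i ∧ (σ i : ℕ) ≤ c + d

theorem clusterAt_iff_isBlock {n d b c : ℕ} {σ : Perm (Fin n)} (hc : c + d < n) :
    ClusterAt (d + 1) (c + 1) (b + 1) σ ↔ IsBlock σ d b c := by
  unfold ClusterAt
  constructor
  · intro h i
    constructor
    · intro hi
      have : (σ i : ℕ) + 1 ∈ Ico (c + 1) (c + 1 + (d + 1)) :=
        h ▸ mem_image_of_mem _ (by simp only [mem_filter, mem_univ, true_and]; omega)
      simp only [mem_Ico] at this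
      omega
    · intro hi
      have : (σ i : ℕ) + 1 ∈ Ico (c + 1) (c + 1 + (d + 1)) := by simp only [mem_Ico]; omega
      rw [← h] at this
      obtain ⟨j, hj, hji⟩ := mem_image.mp this
      obtain rfl : j = i := σ.injective (Fin.ext (by omega))
      simp only [mem_filter, mem_univ, true_and] at hj
      omega
  · intro h
    ext v
    simp only [mem_image, mem_filter, mem_univ, true_and, mem_Ico]
    constructor
    · rintro ⟨i, hi, rfl⟩
      have := (h i).mp (by omega)
      omega
    · intro hv
      refine ⟨σ.symm ⟨v - 1, by omega⟩, ?_, by simp; omega⟩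
      have := (h (σ.symm ⟨v - 1, by omega⟩)).mpr (by simp; omega)
      omega

theorem IsBlock.unique {n d b b' c : ℕ} {σ : Perm (Fin n)} (h : IsBlock σ d b c)
    (h' : IsBlock σ d b' c) (hb : b < n) (hb' : b' < n) : b = b' := by
  have h₁ := (h' ⟨b, hb⟩).mpr ((h ⟨b, hb⟩).mp (by simp))
  have h₂ := (h ⟨b', hb'⟩).mpr ((h' ⟨b', hb'⟩).mp (by simp))
  simp only at h₁ h₂
  omega

variable {N d : ℕ}

section Contract

variable {σ : Perm (Fin (N + d))} {b c : Fin N}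

noncomputable def contract (σ : Perm (Fin (N + d))) (b c : Fin N) (h : IsBlock σ d b c) :
    Perm (Fin N) :=
  Equiv.ofBijective
    (fun y => ⟨collapse c d (σ ⟨expand b d y, expand_lt y.2⟩), collapse_lt c.2 (σ _).2⟩) <|
    Finite.injective_iff_bijective.mp fun y y' hyy' => by
      rcases collapse_eq_collapse_iff.mp (Fin.val_eq_of_eq hyy') with hσ | ⟨hv, hv'⟩
      · exact Fin.ext (expand_strictMono.injective (Fin.val_eq_of_eq (σ.injective (Fin.ext hσ))))
      · exact Fin.ext ((expand_mem_iff.mp ((h _).mpr hv)).trans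
          (expand_mem_iff.mp ((h _).mpr hv')).symm)

theorem contract_val (h : IsBlock σ d b c) (y : Fin N) :
    (contract σ b c h y : ℕ) = collapse c d (σ ⟨expand b d y, expand_lt y.2⟩) := rfl

theorem contract_collapse (h : IsBlock σ d b c) (x : Fin (N + d)) :
    (contract σ b c h ⟨collapse b d x, collapse_lt b.2 x.2⟩ : ℕ) = collapse c d (σ x) := by
  rw [contract_val]
  by_cases hx : (b : ℕ) ≤ x ∧ (x : ℕ) ≤ b + d
  · have hb : expand b d (collapse b d x) = b := by
      rw [collapse_eq_iff.mpr hx]; unfold expand; simp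
    rw [collapse_eq_iff.mpr ((h _).mp (by simp only [hb]; omega)),
      collapse_eq_iff.mpr ((h x).mp hx)]
  · simp only [expand_collapse hx, Fin.eta]

theorem contract_apply_self (h : IsBlock σ d b c) : contract σ b c h b = c := by
  have := contract_collapse h ⟨b, by omega⟩
  simp only [collapse_eq_iff.mpr (show (b : ℕ) ≤ b ∧ (b : ℕ) ≤ b + d by omega), Fin.eta] at this
  exact Fin.ext (this.trans (collapse_eq_iff.mpr ((h _).mp (by simp))))

noncomputable def blockPattern (σ : Perm (Fin (N + d))) (b c : Fin N) (h : IsBlock σ d b c) :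
    Perm (Fin (d + 1)) :=
  Equiv.ofBijective
    (fun j => ⟨σ ⟨b + j, by omega⟩ - c, by
      have := (h ⟨b + j, by omega⟩).mp (by simp only; omega); omega⟩) <|
    Finite.injective_iff_bijective.mp fun j j' hjj' => by
      have hj := (h ⟨b + j, by omega⟩).mp (by simp only; omega)
      have hj' := (h ⟨b + j', by omega⟩).mp (by simp only; omega)
      have hσ : σ ⟨b + j, by omega⟩ = σ ⟨b + j', by omega⟩ :=
        Fin.ext (by have := Fin.val_eq_of_eq hjj'; simp only at this; omega)
      exact Fin.ext (by simpa using Fin.val_eq_of_eq (σ.injective hσ))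

theorem blockPattern_val (h : IsBlock σ d b c) (j : Fin (d + 1)) :
    (blockPattern σ b c h j : ℕ) = σ ⟨b + j, by omega⟩ - c := rfl

end Contract

section Inflate

variable (π : Perm (Fin N)) (ρ : Perm (Fin (d + 1))) (b : Fin N)

def inflateFun (x : Fin (N + d)) : Fin (N + d) :=
  if hx : (b : ℕ) ≤ x ∧ (x : ℕ) ≤ b + d then ⟨π b + ρ ⟨x - b, by omega⟩, by omega⟩
  else ⟨expand (π b) d (π ⟨collapse b d x, collapse_lt b.2 x.2⟩), expand_lt (π _).2⟩

variable {π ρ b}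

theorem inflateFun_val_of_mem {x : Fin (N + d)} (hx : (b : ℕ) ≤ x ∧ (x : ℕ) ≤ b + d) :
    (inflateFun π ρ b x : ℕ) = π b + ρ ⟨x - b, by omega⟩ := by
  simp only [inflateFun, dif_pos hx]

theorem inflateFun_val_of_not_mem {x : Fin (N + d)} (hx : ¬((b : ℕ) ≤ x ∧ (x : ℕ) ≤ b + d)) :
    (inflateFun π ρ b x : ℕ) = expand (π b) d (π ⟨collapse b d x, collapse_lt b.2 x.2⟩) := by
  simp only [inflateFun, dif_neg hx]

theorem inflateFun_mem_iff (x : Fin (N + d)) :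
    (π b : ℕ) ≤ inflateFun π ρ b x ∧ (inflateFun π ρ b x : ℕ) ≤ π b + d ↔
      (b : ℕ) ≤ x ∧ (x : ℕ) ≤ b + d := by
  by_cases hx : (b : ℕ) ≤ x ∧ (x : ℕ) ≤ b + d
  · rw [inflateFun_val_of_mem hx]
    have := (ρ ⟨x - b, by omega⟩).2
    omega
  · rw [inflateFun_val_of_not_mem hx, expand_mem_iff, iff_false_right hx]
    intro hπ
    exact hx (collapse_eq_iff.mp (Fin.val_eq_of_eq (π.injective (Fin.ext hπ))))

theorem inflateFun_injective : Function.Injective (inflateFun π ρ b) := by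
  intro x x' hxx'
  have hmem := (inflateFun_mem_iff x).symm.trans (hxx' ▸ inflateFun_mem_iff x')
  by_cases hx : (b : ℕ) ≤ x ∧ (x : ℕ) ≤ b + d
  · have hx' := hmem.mp hx
    have := Fin.val_eq_of_eq hxx'
    rw [inflateFun_val_of_mem hx, inflateFun_val_of_mem hx'] at this
    have := Fin.val_eq_of_eq (ρ.injective (Fin.ext (Nat.add_left_cancel this)))
    simp only at this
    exact Fin.ext (by omega)
  · have hx' := hx ∘ hmem.mpr
    have := Fin.val_eq_of_eq hxx'
    rw [inflateFun_val_of_not_mem hx, inflateFun_val_of_not_mem hx'] at this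
    have := Fin.val_eq_of_eq (π.injective (Fin.ext (expand_strictMono.injective this)))
    exact Fin.ext ((collapse_eq_collapse_iff.mp this).resolve_right fun h => hx h.1)

variable (π ρ b)

noncomputable def inflate : Perm (Fin (N + d)) :=
  Equiv.ofBijective (inflateFun π ρ b) (Finite.injective_iff_bijective.mp inflateFun_injective)

theorem inflate_apply (x : Fin (N + d)) : inflate π ρ b x = inflateFun π ρ b x := rfl

theorem isBlock_inflate : IsBlock (inflate π ρ b) d b (π b) :=
  fun x => (inflateFun_mem_iff x).symm

variable {π ρ b}

theorem collapse_inflate (x : Fin (N + d)) :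
    collapse (π b) d (inflate π ρ b x) = π ⟨collapse b d x, collapse_lt b.2 x.2⟩ := by
  rw [inflate_apply]
  by_cases hx : (b : ℕ) ≤ x ∧ (x : ℕ) ≤ b + d
  · rw [collapse_eq_iff.mpr ((inflateFun_mem_iff x).mpr hx)]
    simp only [collapse_eq_iff.mpr hx, Fin.eta]
  · rw [inflateFun_val_of_not_mem hx, collapse_expand]

theorem contract_eq_of_inflate_eq {σ : Perm (Fin (N + d))} {c : Fin N}
    (hσ : inflate π ρ b = σ) (hc : π b = c) (h : IsBlock σ d b c) : contract σ b c h = π := by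
  subst hσ hc
  ext y
  rw [contract_val, collapse_inflate]
  simp only [collapse_expand, Fin.eta]

theorem blockPattern_eq_of_inflate_eq {σ : Perm (Fin (N + d))} {c : Fin N}
    (hσ : inflate π ρ b = σ) (hc : π b = c) (h : IsBlock σ d b c) :
    blockPattern σ b c h = ρ := by
  subst hσ hc
  ext j
  rw [blockPattern_val, inflate_apply, inflateFun_val_of_mem (by simp only; omega)]
  simp

theorem eq_of_inflate_eq {π' : Perm (Fin N)} {ρ' : Perm (Fin (d + 1))} {b' : Fin N}
    (hc : π b = π' b') (h : inflate π ρ b = inflate π' ρ' b') : π = π' ∧ ρ = ρ' := by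
  have hblock' : IsBlock (inflate π ρ b) d b' (π b) := h ▸ hc ▸ isBlock_inflate π' ρ' b'
  obtain rfl : b = b' := Fin.ext ((isBlock_inflate π ρ b).unique hblock' (by omega) (by omega))
  exact ⟨(contract_eq_of_inflate_eq rfl rfl (isBlock_inflate π ρ b)).symm.trans
      (contract_eq_of_inflate_eq h.symm hc.symm _),
    (blockPattern_eq_of_inflate_eq rfl rfl (isBlock_inflate π ρ b)).symm.trans
      (blockPattern_eq_of_inflate_eq h.symm hc.symm _)⟩

theorem inflate_contract {σ : Perm (Fin (N + d))} {c : Fin N} (h : IsBlock σ d b c) :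
    inflate (contract σ b c h) (blockPattern σ b c h) b = σ := by
  ext x
  rw [inflate_apply]
  by_cases hx : (b : ℕ) ≤ x ∧ (x : ℕ) ≤ b + d
  · have := (h x).mp hx
    rw [inflateFun_val_of_mem hx, contract_apply_self, blockPattern_val]
    simp only [Nat.add_sub_cancel' hx.1, Fin.eta]
    omega
  · rw [inflateFun_val_of_not_mem hx, contract_collapse, contract_apply_self,
      expand_collapse (hx ∘ (h x).mpr)]

end Inflate

section Patterns

variable {m : ℕ} {τ : Perm (Fin m)} {σ : Perm (Fin (N + d))} {b c : Fin N}

theorem contains_contract (h : IsBlock σ d b c) : Contains σ (contract σ b c h) := by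
  refine ⟨fun y => ⟨expand b d y, expand_lt y.2⟩, fun y y' hy => expand_strictMono hy,
    fun y y' => ?_⟩
  rcases eq_or_ne y y' with rfl | hne
  · simp
  rw [Fin.lt_def, Fin.lt_def, contract_val, contract_val, collapse_lt_collapse_iff]
  rintro ⟨hv, hv'⟩
  exact hne (Fin.ext ((expand_mem_iff.mp ((h _).mpr hv)).trans
    (expand_mem_iff.mp ((h _).mpr hv')).symm))

theorem contains_blockPattern (h : IsBlock σ d b c) : Contains σ (blockPattern σ b c h) := by
  refine ⟨fun j => ⟨b + j, by omega⟩, fun j j' hj => by simpa using hj, fun j j' => ?_⟩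
  have hj := (h ⟨b + j, by omega⟩).mp (by simp only; omega)
  have hj' := (h ⟨b + j', by omega⟩).mp (by simp only; omega)
  dsimp only
  rw [Fin.lt_def, Fin.lt_def, blockPattern_val, blockPattern_val]
  omega

variable {f : Fin m → Fin (N + d)}

theorem contains_contract_of_occurrence (h : IsBlock σ d b c)
    (hfτ : ∀ j k, σ (f j) < σ (f k) ↔ τ j < τ k)
    (hf : StrictMono f)
    (hS : ∀ j k, j ≠ k →
      ¬(((b : ℕ) ≤ f j ∧ (f j : ℕ) ≤ b + d) ∧ ((b : ℕ) ≤ f k ∧ (f k : ℕ) ≤ b + d))) :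
    Contains (contract σ b c h) τ := by
  refine ⟨fun j => ⟨collapse b d (f j), collapse_lt b.2 (f j).2⟩,
    fun j k hjk => (collapse_lt_collapse_iff (hS j k hjk.ne)).mpr (hf hjk), fun j k => ?_⟩
  rcases eq_or_ne j k with rfl | hne
  · simp
  rw [← hfτ, Fin.lt_def, Fin.lt_def, contract_collapse, contract_collapse,
    collapse_lt_collapse_iff]
  rintro ⟨hv, hv'⟩
  exact hS j k hne ⟨(h _).mpr hv, (h _).mpr hv'⟩

theorem contains_blockPattern_of_occurrence (h : IsBlock σ d b c)
    (hfτ : ∀ j k, σ (f j) < σ (f k) ↔ τ j < τ k)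
    (hf : StrictMono f) (hS : ∀ j, (b : ℕ) ≤ f j ∧ (f j : ℕ) ≤ b + d) :
    Contains (blockPattern σ b c h) τ := by
  refine ⟨fun j => ⟨f j - b, by have := hS j; omega⟩, fun j k hjk => ?_, fun j k => ?_⟩
  · have := hS j
    have : (f j : ℕ) < f k := hf hjk
    simp only [Fin.lt_def]
    omega
  · have hj := hS j
    have hk := hS k
    have hσj := (h _).mp hj
    have hσk := (h _).mp hk
    rw [← hfτ, Fin.lt_def, Fin.lt_def, blockPattern_val, blockPattern_val]
    simp only [Nat.add_sub_cancel' hj.1, Nat.add_sub_cancel' hk.1, Fin.eta]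
    omega

theorem not_clusterFree_of_occurrence (h : IsBlock σ d b c)
    (hfτ : ∀ j k, σ (f j) < σ (f k) ↔ τ j < τ k) (hf : StrictMono f)
    {S : Finset (Fin m)} (hmemS : ∀ j, j ∈ S ↔ (b : ℕ) ≤ f j ∧ (f j : ℕ) ≤ b + d)
    (hS : 2 ≤ #S) (hSm : #S < m) : ¬ClusterFree τ := by
  have hne : S.Nonempty := card_pos.mp (by omega)
  have hpos : (S : Set (Fin m)).OrdConnected := ⟨fun j hj k hk i hi => by
    rw [mem_coe, hmemS] at hj hk ⊢
    have h₁ : (f j : ℕ) ≤ f i := hf.monotone hi.1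
    have h₂ : (f i : ℕ) ≤ f k := hf.monotone hi.2
    omega⟩
  have hval : ((S.image τ : Finset (Fin m)) : Set (Fin m)).OrdConnected := by
    refine ⟨?_⟩
    simp only [coe_image, Set.mem_image, mem_coe]
    rintro _ ⟨j, hj, rfl⟩ _ ⟨k, hk, rfl⟩ i hi
    refine ⟨τ.symm i, ?_, by simp⟩
    have hle : ∀ j k, σ (f j) ≤ σ (f k) ↔ τ j ≤ τ k := fun j k => by
      simpa only [not_lt] using (hfτ k j).not
    have h₁ : (σ (f j) : ℕ) ≤ σ (f (τ.symm i)) := (hle _ _).mpr (by simpa using hi.1)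
    have h₂ : (σ (f (τ.symm i)) : ℕ) ≤ σ (f k) := (hle _ _).mpr (by simpa using hi.2)
    have hj' := (h _).mp ((hmemS j).mp hj)
    have hk' := (h _).mp ((hmemS k).mp hk)
    exact (hmemS _).mpr ((h _).mpr (by omega))
  obtain ⟨p, hpm, hp⟩ := exists_mem_iff_of_ordConnected hne hpos
  obtain ⟨q, hqm, hq⟩ := exists_mem_iff_of_ordConnected (hne.image τ) hval
  rw [card_image_of_injective _ τ.injective] at hqm hq
  obtain ⟨s, hs⟩ : ∃ s, S.card = s + 1 := ⟨S.card - 1, by omega⟩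
  have hblock : IsBlock τ s p q := fun j => by
    have := (hp j).symm.trans (τ.injective.mem_finset_image.symm.trans (hq (τ j)))
    rw [hs] at this
    omega
  intro hτ
  exact hτ (s + 1) (p + 1) (q + 1) (by omega) (by omega) (by omega) (by omega)
    ((clusterAt_iff_isBlock (by omega)).mpr hblock)

theorem contains_contract_or_blockPattern (hτ : ClusterFree τ) (h : IsBlock σ d b c)
    (hσ : Contains σ τ) : Contains (contract σ b c h) τ ∨ Contains (blockPattern σ b c h) τ := by
  obtain ⟨f, hf, hfτ⟩ := hσ
  let S : Finset (Fin m) := {j | (b : ℕ) ≤ f j ∧ (f j : ℕ) ≤ b + d}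
  have hmemS : ∀ j, j ∈ S ↔ (b : ℕ) ≤ f j ∧ (f j : ℕ) ≤ b + d := by simp [S]
  by_cases hS₁ : S.card ≤ 1
  · refine .inl (contains_contract_of_occurrence h hfτ hf fun j k hjk hjk' => hjk ?_)
    exact card_le_one.mp hS₁ j ((hmemS j).mpr hjk'.1) k ((hmemS k).mpr hjk'.2)
  by_cases hSm : S.card = m
  · have hSuniv : S = univ := eq_univ_of_card S (by simpa using hSm)
    exact .inr (contains_blockPattern_of_occurrence h hfτ hf fun j =>
      (hmemS j).mp (hSuniv ▸ mem_univ j))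
  have hSlt : S.card < m := lt_of_le_of_ne ((card_le_univ S).trans (by simp)) hSm
  exact absurd hτ (not_clusterFree_of_occurrence h hfτ hf hmemS (by omega) hSlt)

theorem avoids_iff_contract_and_blockPattern (hτ : ClusterFree τ) (h : IsBlock σ d b c) :
    Avoids σ τ ↔ Avoids (contract σ b c h) τ ∧ Avoids (blockPattern σ b c h) τ :=
  ⟨fun hσ => ⟨hσ.of_contains (contains_contract h), hσ.of_contains (contains_blockPattern h)⟩,
    fun ⟨hπ, hρ⟩ hσ => (contains_contract_or_blockPattern hτ h hσ).elim hπ hρ⟩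

end Patterns

theorem bijOn_inflate {m : ℕ} {τ : Perm (Fin m)} (hτ : ClusterFree τ) {c : ℕ} (hc : c < N) :
    Set.BijOn (fun p : Perm (Fin N) × Perm (Fin (d + 1)) => inflate p.1 p.2 (p.1.symm ⟨c, hc⟩))
      (AvoidSet N τ ×ˢ AvoidSet (d + 1) τ)
      (ClusterEvent (N + d) (d + 1) (c + 1) ∩ AvoidSet (N + d) τ) := by
  have hblock (π : Perm (Fin N)) (ρ : Perm (Fin (d + 1))) :
      IsBlock (inflate π ρ (π.symm ⟨c, hc⟩)) d (π.symm ⟨c, hc⟩) c := by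
    simpa using isBlock_inflate π ρ (π.symm ⟨c, hc⟩)
  refine ⟨?_, ?_, ?_⟩
  · rintro ⟨π, ρ⟩ ⟨hπ, hρ⟩
    refine ⟨⟨π.symm ⟨c, hc⟩ + 1, by omega, by omega,
      (clusterAt_iff_isBlock (by omega)).mpr (hblock π ρ)⟩, ?_⟩
    rw [AvoidSet, Set.mem_ofPred_eq,
      avoids_iff_contract_and_blockPattern hτ (c := ⟨c, hc⟩) (hblock π ρ),
      contract_eq_of_inflate_eq rfl (by simp), blockPattern_eq_of_inflate_eq rfl (by simp)]
    exact ⟨hπ, hρ⟩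
  · rintro ⟨π, ρ⟩ - ⟨π', ρ'⟩ - h
    obtain ⟨rfl, rfl⟩ := eq_of_inflate_eq (by simp) h
    rfl
  · rintro σ ⟨⟨a, ha, haN, hσa⟩, hσ⟩
    obtain ⟨b, rfl⟩ : ∃ b, a = b + 1 := ⟨a - 1, by omega⟩
    have h : IsBlock σ d (⟨b, by omega⟩ : Fin N) (⟨c, hc⟩ : Fin N) :=
      (clusterAt_iff_isBlock (by omega)).mp hσa
    refine ⟨(contract σ _ _ h, blockPattern σ _ _ h),
      (avoids_iff_contract_and_blockPattern hτ h).mp hσ, ?_⟩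
    dsimp only
    rw [(contract σ _ _ h).symm_apply_eq.mpr (contract_apply_self h).symm, inflate_contract]

theorem ncard_clusterEvent_inter_avoidSet {m : ℕ} {τ : Perm (Fin m)} (hτ : ClusterFree τ)
    {c : ℕ} (hc : c < N) :
    (ClusterEvent (N + d) (d + 1) (c + 1) ∩ AvoidSet (N + d) τ).ncard =
      (AvoidSet N τ).ncard * (AvoidSet (d + 1) τ).ncard := by
  rw [← (bijOn_inflate hτ hc).image_eq, (bijOn_inflate hτ hc).injOn.ncard_image, Set.ncard_prod]

end Inflation

theorem avoid_cluster_exact_clusterFree_general (m : ℕ) (τ : Equiv.Perm (Fin m))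
    (hτ : ClusterFree τ)
    (n : ℕ) (l : ℕ) (hl2 : 2 ≤ l) (hln : l ≤ n - 1)
    (k : ℕ) (hk1 : 1 ≤ k) (hk2 : k ≤ n - l + 1) :
    (ClusterEvent n l k ∩ AvoidSet n τ).ncard =
      (AvoidSet (n - l + 1) τ).ncard * (AvoidSet l τ).ncard ∧
    ((ClusterEvent n l k ∩ AvoidSet n τ).ncard : ℝ) / ((AvoidSet n τ).ncard : ℝ) =
      (((AvoidSet (n - l + 1) τ).ncard * (AvoidSet l τ).ncard : ℕ) : ℝ) /
        ((AvoidSet n τ).ncard : ℝ) := by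
  obtain ⟨d, rfl⟩ : ∃ d, l = d + 1 := ⟨l - 1, by omega⟩
  obtain ⟨N, rfl⟩ : ∃ N, n = N + d := ⟨n - d, by omega⟩
  obtain ⟨c, rfl⟩ : ∃ c, k = c + 1 := ⟨k - 1, by omega⟩
  rw [show N + d - (d + 1) + 1 = N by omega]
  have hcount := Inflation.ncard_clusterEvent_inter_avoidSet (d := d) hτ (show c < N by omega)
  exact ⟨hcount, by rw [hcount]⟩

/-- for cluster-free `τ`, the exact number (and probability) of `τ`-avoiding
permutations in `A^{(n)}_{l;k}`. -/
theorem avoid_cluster_exact_clusterFree (m : ℕ) (hm : 2 ≤ m) (τ : Equiv.Perm (Fin m))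
    (hτ : ClusterFree τ)
    (n : ℕ) (hn : 3 ≤ n) (l : ℕ) (hl2 : 2 ≤ l) (hln : l ≤ n - 1)
    (k : ℕ) (hk1 : 1 ≤ k) (hk2 : k ≤ n - l + 1) :
    (ClusterEvent n l k ∩ AvoidSet n τ).ncard =
      (AvoidSet (n - l + 1) τ).ncard * (AvoidSet l τ).ncard ∧
    ((ClusterEvent n l k ∩ AvoidSet n τ).ncard : ℝ) / ((AvoidSet n τ).ncard : ℝ) =
      (((AvoidSet (n - l + 1) τ).ncard * (AvoidSet l τ).ncard : ℕ) : ℝ) /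
        ((AvoidSet n τ).ncard : ℝ) :=
  avoid_cluster_exact_clusterFree_general m τ hτ n l hl2 hln k hk1 hk2
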